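/- arXiv:1801.05749 — 3 statements merged into one kernel-verified Lean document; each statement's English description precedes it below -/
import Mathlib

section
/- For every m ≥ 2, the coefficient of z^{m−2} in L*_m equals ∑_{1 ≤ j < k ≤ ⌊(m+1)/2⌋} b_j b_k − ∑_{j=1}^{⌊m/2⌋} (a_j^2 − 1). Equivalently, the second elementary symmetric polynomial in the roots of L*_m equals that expression. -/
/-!
Reverse the coefficients: `P_k(w) = w^{2k} L*_{2k}(1/w)`, `Q_k(w) = w^{2k} K_{2k}(1/w)` and
`R_k(w) = w^{2k+1} L*_{2k+1}(1/w)`. Since `deg L*_m ≤ m` and `deg K_{2k} ≤ 2k`, the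
recursion becomes `R_k = P_k - b_{k+1} w Q_k`, `P_{k+1} = R_k - (a_{k+1}^2 - 1) w^2 Q_k`,
`Q_{k+1} = R_k + w^2 Q_k`, with `P_0 = Q_0 = 1`. Only the coefficients of `1, w, w^2` are needed,
and these follow by induction on `k`. The statement about the roots is then Vieta's formula.
-/

open Polynomial Finset

/-- Geronimo–Case recursion: `(GC a b m).1 = L*_m`, `(GC a b m).2 = K_m`. -/
noncomputable def GC (a b : ℕ → ℝ) : ℕ → Polynomial ℝ × Polynomial ℝ
  | 0 => (1, 1)
  | m + 1 =>
      let p := GC a b m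
      if m % 2 = 0 then
        (Polynomial.X * p.1 - Polynomial.C (b (m / 2 + 1)) * p.2, p.2)
      else
        (Polynomial.X * p.1 - Polynomial.C ((a (m / 2 + 1)) ^ 2 - 1) * p.2,
         Polynomial.X * p.1 + p.2)

namespace Polynomial

theorem reflect_add_of_natDegree_le {R : Type*} [Semiring R] {p : R[X]} {N : ℕ}
    (hp : p.natDegree ≤ N) (n : ℕ) : reflect (N + n) p = X ^ n * reflect N p := by
  rw [add_comm, ← one_mul p, reflect_mul 1 p (by simp) hp, reflect_one, one_mul]

theorem reflect_succ_X_mul {R : Type*} [Semiring R] {p : R[X]} {N : ℕ}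
    (hp : p.natDegree ≤ N) : reflect (N + 1) (X * p) = reflect N p := by
  rw [add_comm, reflect_mul X p natDegree_X_le hp, reflect_one_X, one_mul]

theorem natDegree_X_mul_le_of_le {R : Type*} [Semiring R] {p : R[X]} {N : ℕ}
    (hp : p.natDegree ≤ N) : (X * p).natDegree ≤ N + 1 :=
  add_comm 1 N ▸ natDegree_mul_le_of_le natDegree_X_le hp

end Polynomial

theorem Finset.sum_filter_lt_eq_sum_powersetCard_two {ι R : Type*} [LinearOrder ι] [CommSemiring R]
    (s : Finset ι) (f : ι → R) :
    ∑ p ∈ (s ×ˢ s).filter (fun p => p.1 < p.2), f p.1 * f p.2 =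
      ∑ t ∈ s.powersetCard 2, ∏ i ∈ t, f i := by
  refine sum_bij (fun p _ => {p.1, p.2}) ?_ ?_ ?_ ?_
  · rintro ⟨x, y⟩ hp
    simp only [mem_filter, mem_product] at hp
    simp [mem_powersetCard, insert_subset_iff, card_pair hp.2.ne, hp.1.1, hp.1.2]
  · rintro ⟨x, y⟩ hp ⟨x', y'⟩ hp' h
    simp only [mem_filter] at hp hp'
    have h' := congrArg ((↑) : Finset ι → Set ι) h
    push_cast at h'
    rcases Set.pair_eq_pair_iff.mp h' with ⟨rfl, rfl⟩ | ⟨rfl, rfl⟩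
    · rfl
    · exact absurd (hp.2.trans hp'.2) (lt_irrefl _)
  · intro t ht
    obtain ⟨hts, htc⟩ := mem_powersetCard.mp ht
    obtain ⟨x, y, hxy, rfl⟩ := card_eq_two.mp htc
    rcases hxy.lt_or_gt with h | h
    · exact ⟨(x, y), by simp_all [insert_subset_iff], rfl⟩
    · exact ⟨(y, x), by simp_all [insert_subset_iff], pair_comm _ _⟩
  · rintro ⟨x, y⟩ hp
    simp only [mem_filter] at hp
    rw [prod_pair hp.2.ne]

theorem Polynomial.coeff_prod_X_sub_C_of_card_eq_add_two {ι R : Type*} [CommRing R] (s : Finset ι)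
    (z : ι → R) {n : ℕ} (hs : #s = n + 2) :
    (∏ j ∈ s, (X - C (z j))).coeff n = ∑ t ∈ s.powersetCard 2, ∏ i ∈ t, z i := by
  have h := Multiset.prod_X_sub_C_coeff (s.val.map z) (k := n) (by simp [hs])
  simp only [Multiset.map_map, Function.comp_def, Multiset.card_map, card_val, hs,
    Nat.add_sub_cancel_left] at h
  rw [Finset.prod, h, Finset.esymm_map_val]
  norm_num

noncomputable def esymmTwo {R : Type*} [CommSemiring R] (f : ℕ → R) (n : ℕ) : R :=
  ∑ p ∈ (Icc 1 n ×ˢ Icc 1 n).filter (fun p => p.1 < p.2), f p.1 * f p.2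

theorem esymmTwo_succ {R : Type*} [CommSemiring R] (f : ℕ → R) (n : ℕ) :
    esymmTwo f (n + 1) = esymmTwo f n + (∑ j ∈ Icc 1 n, f j) * f (n + 1) := by
  simp only [esymmTwo, sum_filter, sum_product_right]
  rw [sum_Icc_succ_top (by omega), sum_Icc_succ_top (by omega), sum_mul]
  congr 1
  · refine sum_congr rfl fun y hy => ?_
    rw [sum_Icc_succ_top (by omega), if_neg (by simp at hy; omega), add_zero]
  · rw [if_neg (lt_irrefl _), add_zero]
    exact sum_congr rfl fun x hx => if_pos (by simp at hx; omega)

namespace GC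

variable (a b : ℕ → ℝ)

theorem two_mul_add_one (k : ℕ) : GC a b (2 * k + 1) =
    (X * (GC a b (2 * k)).1 - C (b (k + 1)) * (GC a b (2 * k)).2, (GC a b (2 * k)).2) := by
  rw [GC]; simp

theorem two_mul_add_two (k : ℕ) : GC a b (2 * k + 2) =
    (X * (GC a b (2 * k + 1)).1 - C (a (k + 1) ^ 2 - 1) * (GC a b (2 * k)).2,
      X * (GC a b (2 * k + 1)).1 + (GC a b (2 * k)).2) := by
  rw [GC]
  simp [Nat.add_mod, two_mul_add_one, show (2 * k + 1) / 2 = k by omega]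

theorem natDegree_two_mul_add_one_fst_le {k : ℕ} (hL : (GC a b (2 * k)).1.natDegree ≤ 2 * k)
    (hK : (GC a b (2 * k)).2.natDegree ≤ 2 * k) :
    (GC a b (2 * k + 1)).1.natDegree ≤ 2 * k + 1 := by
  rw [two_mul_add_one]
  exact (natDegree_sub_le_of_le (natDegree_X_mul_le_of_le hL)
    ((natDegree_C_mul_le _ _).trans hK)).trans (by omega)

theorem natDegree_two_mul_le (k : ℕ) :
    (GC a b (2 * k)).1.natDegree ≤ 2 * k ∧ (GC a b (2 * k)).2.natDegree ≤ 2 * k := by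
  induction k with
  | zero => simp [GC]
  | succ k ih =>
    have hXL := natDegree_X_mul_le_of_le (natDegree_two_mul_add_one_fst_le a b ih.1 ih.2)
    have hK : (GC a b (2 * k)).2.natDegree ≤ 2 * k + 2 := by omega
    rw [show 2 * (k + 1) = 2 * k + 2 by ring, two_mul_add_two]
    exact ⟨(natDegree_sub_le_of_le hXL ((natDegree_C_mul_le _ _).trans hK)).trans (by omega),
      natDegree_add_le_of_degree_le hXL hK⟩

theorem reflect_two_mul_add_one_fst (k : ℕ) :
    reflect (2 * k + 1) (GC a b (2 * k + 1)).1 =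
      reflect (2 * k) (GC a b (2 * k)).1 - C (b (k + 1)) * X * reflect (2 * k) (GC a b (2 * k)).2 := by
  obtain ⟨hL, hK⟩ := natDegree_two_mul_le a b k
  rw [two_mul_add_one, reflect_sub, reflect_succ_X_mul hL, reflect_C_mul,
    reflect_add_of_natDegree_le hK, pow_one, mul_assoc]

theorem reflect_two_mul_add_two (k : ℕ) :
    reflect (2 * k + 2) (GC a b (2 * k + 2)).1 =
      reflect (2 * k + 1) (GC a b (2 * k + 1)).1
        - C (a (k + 1) ^ 2 - 1) * X ^ 2 * reflect (2 * k) (GC a b (2 * k)).2 ∧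
    reflect (2 * k + 2) (GC a b (2 * k + 2)).2 =
      reflect (2 * k + 1) (GC a b (2 * k + 1)).1 + X ^ 2 * reflect (2 * k) (GC a b (2 * k)).2 := by
  obtain ⟨hL, hK⟩ := natDegree_two_mul_le a b k
  have hL' := natDegree_two_mul_add_one_fst_le a b hL hK
  rw [two_mul_add_two, reflect_sub, reflect_add, reflect_succ_X_mul hL', reflect_C_mul,
    reflect_add_of_natDegree_le hK, mul_assoc]
  exact ⟨rfl, rfl⟩

theorem coeff_reflect_two_mul (k : ℕ) :
    (reflect (2 * k) (GC a b (2 * k)).1).coeff 0 = 1 ∧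
    (reflect (2 * k) (GC a b (2 * k)).1).coeff 1 = -∑ j ∈ Icc 1 k, b j ∧
    (reflect (2 * k) (GC a b (2 * k)).1).coeff 2 =
      esymmTwo b k - ∑ j ∈ Icc 1 k, (a j ^ 2 - 1) ∧
    (reflect (2 * k) (GC a b (2 * k)).2).coeff 0 = 1 ∧
    (reflect (2 * k) (GC a b (2 * k)).2).coeff 1 = -∑ j ∈ Icc 1 k, b j := by
  induction k with
  | zero => simp [GC, esymmTwo, coeff_one]
  | succ k ih =>
    obtain ⟨hP0, hP1, hP2, hQ0, hQ1⟩ := ih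
    obtain ⟨hL, hK⟩ := reflect_two_mul_add_two a b k
    rw [show 2 * (k + 1) = 2 * k + 2 by ring, hL, hK, reflect_two_mul_add_one_fst]
    simp only [coeff_add, coeff_sub, mul_assoc, coeff_C_mul, coeff_X_pow_mul', coeff_X_mul,
      coeff_X_mul_zero, Nat.reduceLeDiff, reduceIte, tsub_self, hP0, hP1, hP2, hQ0, hQ1,
      sum_Icc_succ_top (Nat.le_add_left 1 k), esymmTwo_succ]
    refine ⟨?_, ?_, ?_, ?_, ?_⟩ <;> ring

theorem coeff_fst_sub_two {m : ℕ} (hm : 2 ≤ m) :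
    (GC a b m).1.coeff (m - 2) =
      esymmTwo b ((m + 1) / 2) - ∑ j ∈ Icc 1 (m / 2), (a j ^ 2 - 1) := by
  rw [← revAt_le hm, ← coeff_reflect]
  obtain ⟨k, rfl | rfl⟩ := Nat.even_or_odd' m
  · rw [(coeff_reflect_two_mul a b k).2.2.1, show (2 * k + 1) / 2 = k by omega,
      show 2 * k / 2 = k by omega]
  · obtain ⟨-, -, hP2, -, hQ1⟩ := coeff_reflect_two_mul a b k
    rw [reflect_two_mul_add_one_fst, show (2 * k + 1 + 1) / 2 = k + 1 by omega,
      show (2 * k + 1) / 2 = k by omega, esymmTwo_succ]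
    simp only [coeff_sub, mul_assoc, coeff_C_mul, coeff_X_mul, hP2, hQ1]
    ring

end GC

theorem geronimo_case_second_coeff_general (a b : ℕ → ℝ) :
    (∀ m, 2 ≤ m → ((GC a b m).1).coeff (m - 2) =
      (∑ p ∈ (Finset.Icc 1 ((m + 1) / 2) ×ˢ Finset.Icc 1 ((m + 1) / 2)).filter
          (fun p => p.1 < p.2), b p.1 * b p.2)
        - ∑ j ∈ Finset.Icc 1 (m / 2), (a j ^ 2 - 1)) ∧
    (∀ m (z : Fin m → ℂ), 2 ≤ m →
      ((GC a b m).1).map (algebraMap ℝ ℂ) = ∏ j, (X - C (z j)) →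
      (∑ p ∈ (Finset.univ : Finset (Fin m × Fin m)).filter (fun p => p.1 < p.2),
          z p.1 * z p.2) =
        (∑ p ∈ (Finset.Icc 1 ((m + 1) / 2) ×ˢ Finset.Icc 1 ((m + 1) / 2)).filter
            (fun p => p.1 < p.2), ((b p.1 : ℝ) : ℂ) * ((b p.2 : ℝ) : ℂ))
          - ∑ j ∈ Finset.Icc 1 (m / 2), (((a j : ℝ) : ℂ) ^ 2 - 1)) := by
  refine ⟨fun m hm => GC.coeff_fst_sub_two a b hm, fun m z hm hz => ?_⟩
  obtain ⟨n, rfl⟩ := Nat.exists_eq_add_of_le' hm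
  have hcoeff := GC.coeff_fst_sub_two a b hm
  rw [Nat.add_sub_cancel] at hcoeff
  rw [← univ_product_univ, sum_filter_lt_eq_sum_powersetCard_two,
    ← coeff_prod_X_sub_C_of_card_eq_add_two (n := n) _ _ (by simp), ← hz, coeff_map, hcoeff]
  simp [esymmTwo]

theorem geronimo_case_second_coeff (a b : ℕ → ℝ) (ha : ∀ j, 0 < a j) :
    (∀ m, 2 ≤ m → ((GC a b m).1).coeff (m - 2) =
      (∑ p ∈ (Finset.Icc 1 ((m + 1) / 2) ×ˢ Finset.Icc 1 ((m + 1) / 2)).filter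
          (fun p => p.1 < p.2), b p.1 * b p.2)
        - ∑ j ∈ Finset.Icc 1 (m / 2), (a j ^ 2 - 1)) ∧
    (∀ m (z : Fin m → ℂ), 2 ≤ m →
      ((GC a b m).1).map (algebraMap ℝ ℂ) = ∏ j, (X - C (z j)) →
      (∑ p ∈ (Finset.univ : Finset (Fin m × Fin m)).filter (fun p => p.1 < p.2),
          z p.1 * z p.2) =
        (∑ p ∈ (Finset.Icc 1 ((m + 1) / 2) ×ˢ Finset.Icc 1 ((m + 1) / 2)).filter
            (fun p => p.1 < p.2), ((b p.1 : ℝ) : ℂ) * ((b p.2 : ℝ) : ℂ))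
          - ∑ j ∈ Finset.Icc 1 (m / 2), (((a j : ℝ) : ℂ) ^ 2 - 1)) :=
  geronimo_case_second_coeff_general a b
end

section
/- Let K_{2k}(z) = z^{2k} + c_{2k−1} z^{2k−1} + … + c_1 z + 1 be the Geronimo–Case polynomial and let u^{(2k)}_l denote the coefficient of z^l in L*_{2k}. For each j ≤ k, the coefficients satisfy c_j − c_{j−2} = u^{(2k)}_{2k−j} − u^{(2k)}_{j−2} (with c_l = 0 for l < 0 and c_0 = c_{2k} = 1). -/
open Polynomial Finset

/-!
Write `p = L*_{2k}`, `q = K_{2k}`. Two steps of the recursion give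
`L*_{2k+2} = z²p − b z q − (a² − 1) q` and `K_{2k+2} = z²p − b z q + q`. Reflecting at degree
`2k + 2`, the palindromicity `z^{2k} q(1/z) = q` of `K_{2k}` and the identity
`(1 − z²) q = L_{2k} − z²p` propagate together from `k` to `k + 1`. Reading off the coefficient of
`z^j` in that identity gives the relation; `j ≤ 2k` makes the coefficient of `z^j` in `L_{2k}`
equal to `u_{2k−j}`.
-/

theorem Polynomial.reflect_add_X_pow_mul {R : Type*} [Semiring R] {f : R[X]} {N M i : ℕ}
    (hf : f.natDegree ≤ N) (hi : i ≤ M) :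
    reflect (N + M) (X ^ i * f) = X ^ (M - i) * reflect N f := by
  rw [add_comm, reflect_mul _ _ (natDegree_X_pow_le i |>.trans hi) hf, reflect_monomial,
    revAt_le hi]

theorem natDegree_GC_le (a b : ℕ → ℝ) (m : ℕ) :
    (GC a b m).1.natDegree ≤ m ∧ (GC a b m).2.natDegree ≤ m := by
  induction m with
  | zero => simp [GC]
  | succ m ih =>
    have hXp : (X * (GC a b m).1).natDegree ≤ m + 1 :=
      natDegree_mul_le.trans (by simp; omega)
    have hCq (c : ℝ) : (C c * (GC a b m).2).natDegree ≤ m + 1 :=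
      (natDegree_C_mul_le _ _).trans (by omega)
    rw [GC]
    split_ifs <;> dsimp only
    · exact ⟨(natDegree_sub_le _ _).trans (max_le hXp (hCq _)), by omega⟩
    · exact ⟨(natDegree_sub_le _ _).trans (max_le hXp (hCq _)),
        (natDegree_add_le _ _).trans (max_le hXp (by omega))⟩

theorem GC_two_mul_add_two (a b : ℕ → ℝ) (k : ℕ) :
    GC a b (2 * k + 2) =
      (X ^ 2 * (GC a b (2 * k)).1 - C (b (k + 1)) * (X * (GC a b (2 * k)).2)
          - C (a (k + 1) ^ 2 - 1) * (GC a b (2 * k)).2,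
        X ^ 2 * (GC a b (2 * k)).1 - C (b (k + 1)) * (X * (GC a b (2 * k)).2)
          + (GC a b (2 * k)).2) := by
  have h₀ : 2 * k % 2 = 0 := by omega
  have h₁ : (2 * k + 1) % 2 = 1 := by omega
  have h₂ : (2 * k + 1) / 2 = k := by omega
  simp only [GC, h₀, h₁, h₂, Nat.mul_div_cancel_left k two_pos, if_true, one_ne_zero, if_false]
  congr 1 <;> ring

theorem reflect_GC_two_mul (a b : ℕ → ℝ) (k : ℕ) :
    reflect (2 * k) (GC a b (2 * k)).2 = (GC a b (2 * k)).2 ∧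
      (1 - X ^ 2) * (GC a b (2 * k)).2 =
        reflect (2 * k) (GC a b (2 * k)).1 - X ^ 2 * (GC a b (2 * k)).1 := by
  induction k with
  | zero => simp [GC, reflect_one]
  | succ k ih =>
    rw [mul_add_one, GC_two_mul_add_two]
    obtain ⟨hpal, hid⟩ := ih
    obtain ⟨hp, hq⟩ := natDegree_GC_le a b (2 * k)
    set p := (GC a b (2 * k)).1
    set q := (GC a b (2 * k)).2
    have rp : reflect (2 * k + 2) (X ^ 2 * p) = reflect (2 * k) p := by
      simpa using reflect_add_X_pow_mul (M := 2) (i := 2) hp le_rfl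
    have rXq : reflect (2 * k + 2) (X * q) = X * q := by
      simpa [hpal] using reflect_add_X_pow_mul (M := 2) (i := 1) hq one_le_two
    have rq : reflect (2 * k + 2) q = X ^ 2 * q := by
      simpa [hpal] using reflect_add_X_pow_mul (M := 2) (i := 0) hq zero_le_two
    simp only [reflect_add, reflect_sub, reflect_C_mul, rp, rXq, rq]
    exact ⟨by linear_combination -hid, by linear_combination hid⟩

theorem geronimo_case_coeff_relation_general (a b : ℕ → ℝ) (k : ℕ)
    (j : ℕ) (hj : j ≤ k) :
    ((GC a b (2 * k)).2).coeff j - (if 2 ≤ j then ((GC a b (2 * k)).2).coeff (j - 2) else 0) =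
      ((GC a b (2 * k)).1).coeff (2 * k - j)
        - (if 2 ≤ j then ((GC a b (2 * k)).1).coeff (j - 2) else 0) := by
  have := congrArg (coeff · j) (reflect_GC_two_mul a b k).2
  simpa [sub_mul, coeff_X_pow_mul', coeff_reflect, revAt_le (by omega : j ≤ 2 * k)] using this

theorem geronimo_case_coeff_relation (a b : ℕ → ℝ) (ha : ∀ j, 0 < a j) (k : ℕ)
    (j : ℕ) (hj : j ≤ k) :
    ((GC a b (2 * k)).2).coeff j - (if 2 ≤ j then ((GC a b (2 * k)).2).coeff (j - 2) else 0) =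
      ((GC a b (2 * k)).1).coeff (2 * k - j)
        - (if 2 ≤ j then ((GC a b (2 * k)).1).coeff (j - 2) else 0) :=
  geronimo_case_coeff_relation_general a b k j hj
end

section
/- Viewing the coefficients (u^{(2k+1)}_{2k}, …, u^{(2k+1)}_0) of L*_{2k+1} as smooth functions of the variables (u^{(2k)}_{2k−1}, …, u^{(2k)}_0, b_{k+1}) via the relation u^{(2k+1)}_j = u^{(2k)}_{j−1} − b_{k+1} c_j (where c_j are the coefficients of K_{2k}, themselves functions of the u^{(2k)}'s), the Jacobian determinant of this map equals −1. -/
open Polynomial Finset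

/-- Coefficients `c_j` of `K_{2k}` as functions of the coefficients
`u = (u^{(2k)}_l)_l` of `L*_{2k}`, via `c_0 = 1`, `c_1 = u_{2k-1}` and
`c_{j+2} = c_j + u_{2k-(j+2)} - u_j`. -/
def cK (k : ℕ) (u : ℕ → ℝ) : ℕ → ℝ
  | 0 => 1
  | 1 => u (2 * k - 1)
  | j + 2 => cK k u j + u (2 * k - (j + 2)) - u j

/-- The map `(u^{(2k)}_0, …, u^{(2k)}_{2k-1}, b_{k+1}) ↦ (u^{(2k+1)}_0, …, u^{(2k+1)}_{2k})`
given by `u^{(2k+1)}_j = u^{(2k)}_{j-1} - b_{k+1}·c_j` (with `u^{(2k)}_{-1} := 0` and the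
palindromic convention `c_j = c_{2k-j}`).  The vector `v` encodes the `u`'s in its first
`2k` coordinates and `b_{k+1}` in its last coordinate. -/
def stepOddMap (k : ℕ) (v : Fin (2 * k + 1) → ℝ) : Fin (2 * k + 1) → ℝ :=
  let u : ℕ → ℝ := fun l => if h : l < 2 * k then v ⟨l, Nat.lt_succ_of_lt h⟩ else 0
  let bk : ℝ := v ⟨2 * k, Nat.lt_succ_self _⟩
  fun j => (if 1 ≤ (j : ℕ) then u ((j : ℕ) - 1) else 0)
    - bk * cK k u (min (j : ℕ) (2 * k - (j : ℕ)))

open Function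

/-!
Each `c_m` is affine in `u` and does not depend on `u_l` for `m - 1 ≤ l ≤ 2k - m - 1`.
Hence `∂u^{(2k+1)}_i / ∂u_l = δ_{i, l+1}` as soon as `min(i, 2k - i) ≤ min(l + 1, 2k - l - 1)`,
while `∂u^{(2k+1)}_0 / ∂b = -c_0 = -1`. Pair row `i` with column `i - 1` and row `0` with the
`b`-column; this cyclic shift of `2k + 1` columns is an even permutation. Listing the rows as
`0, 2k, 1, 2k - 1, 2, …` then makes the Jacobian lower triangular with diagonal `(-1, 1, …, 1)`.
-/

theorem Matrix.BlockTriangular.det_eq_prod_diag {m R α : Type*} [Fintype m] [DecidableEq m]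
    [CommRing R] [LinearOrder α] {M : Matrix m m R} {b : m → α} (hM : M.BlockTriangular b)
    (hb : Injective b) : M.det = ∏ i, M i i := by
  let _ : LinearOrder m := LinearOrder.lift' b hb
  exact Matrix.det_of_isUpperTriangular hM

theorem Matrix.det_submatrix_finRotate_symm_odd {R : Type*} [CommRing R] (n : ℕ)
    (M : Matrix (Fin (2 * n + 1)) (Fin (2 * n + 1)) R) :
    (M.submatrix id (finRotate (2 * n + 1)).symm).det = M.det := by
  rw [Matrix.det_permute', Equiv.Perm.sign_symm, sign_finRotate, Nat.add_sub_cancel,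
    (even_two_mul n).neg_one_pow, Units.val_one, Int.cast_one, one_mul]

theorem finRotate_symm_zero (n : ℕ) : (finRotate (n + 1)).symm 0 = Fin.last n :=
  (finRotate (n + 1)).symm_apply_eq.mpr finRotate_last.symm

theorem finRotate_symm_succ {n : ℕ} (i : Fin n) : (finRotate (n + 1)).symm i.succ = i.castSucc :=
  (finRotate (n + 1)).symm_apply_eq.mpr (Fin.ext (by
    rw [coe_finRotate_of_ne_last (Fin.castSucc_lt_last i).ne]; simp))

theorem HasFDerivAt.apply_eq_of_add_smul {𝕜 E F : Type*} [NontriviallyNormedField 𝕜]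
    [NormedAddCommGroup E] [NormedSpace 𝕜 E] [NormedAddCommGroup F] [NormedSpace 𝕜 F]
    {f : E → F} {f' : E →L[𝕜] F} {x e : E} {w : F} (hf : HasFDerivAt f f' x)
    (hline : ∀ t : 𝕜, f (x + t • e) = f x + t • w) : f' e = w := by
  refine (hf.hasLineDerivAt e).unique ?_
  have : HasDerivAt (fun t : 𝕜 => f x + t • w) w 0 := by
    simpa using ((hasDerivAt_id (0 : 𝕜)).smul_const w).const_add (f x)
  simpa only [HasLineDerivAt, hline] using this

theorem cK_update (k : ℕ) (u : ℕ → ℝ) (l : ℕ) (x : ℝ) :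
    ∀ m, m ≤ l + 1 → l + m + 1 ≤ 2 * k → cK k (update u l x) m = cK k u m
  | 0, _, _ => rfl
  | 1, _, h => update_of_ne (by omega) _ _
  | m + 2, h₁, h₂ => by
    rw [cK, cK, cK_update k u l x m (by omega) (by omega), update_of_ne (by omega),
      update_of_ne (by omega)]

theorem differentiable_cK {E : Type*} [NormedAddCommGroup E] [NormedSpace ℝ E] (k : ℕ)
    {g : E → ℕ → ℝ} (hg : ∀ l, Differentiable ℝ fun x => g x l) :
    ∀ m, Differentiable ℝ fun x => cK k (g x) m
  | 0 => differentiable_const _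
  | 1 => hg _
  | m + 2 => ((differentiable_cK k hg m).add (hg _)).sub (hg m)

def evenCoeffs (k : ℕ) (v : Fin (2 * k + 1) → ℝ) : ℕ → ℝ :=
  fun l => if h : l < 2 * k then v ⟨l, Nat.lt_succ_of_lt h⟩ else 0

theorem stepOddMap_apply (k : ℕ) (v : Fin (2 * k + 1) → ℝ) (i : Fin (2 * k + 1)) :
    stepOddMap k v i = (if 1 ≤ (i : ℕ) then evenCoeffs k v (i - 1) else 0)
      - v (Fin.last _) * cK k (evenCoeffs k v) (min (i : ℕ) (2 * k - i)) := rfl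

theorem differentiable_evenCoeffs (k l : ℕ) : Differentiable ℝ fun v => evenCoeffs k v l := by
  unfold evenCoeffs
  split_ifs
  exacts [differentiable_apply _, differentiable_const _]

theorem differentiable_stepOddMap (k : ℕ) : Differentiable ℝ (stepOddMap k) := by
  refine differentiable_pi.2 fun i => ?_
  have hc := differentiable_cK k (differentiable_evenCoeffs k) (min (i : ℕ) (2 * k - i))
  simp only [stepOddMap_apply]
  split_ifs
  exacts [(differentiable_evenCoeffs k _).sub ((differentiable_apply _).mul hc),
    (differentiable_const _).sub ((differentiable_apply _).mul hc)]

theorem evenCoeffs_add_smul_single_last (k : ℕ) (v : Fin (2 * k + 1) → ℝ) (t : ℝ) :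
    evenCoeffs k (v + t • Pi.single (Fin.last _) 1) = evenCoeffs k v := by
  funext l
  unfold evenCoeffs
  split_ifs with h
  · simp [Fin.ext_iff, h.ne]
  · rfl

theorem evenCoeffs_add_smul_single_castSucc (k : ℕ) (v : Fin (2 * k + 1) → ℝ) (j : Fin (2 * k))
    (t : ℝ) : evenCoeffs k (v + t • Pi.single j.castSucc 1) =
      update (evenCoeffs k v) j (evenCoeffs k v j + t) := by
  funext l
  by_cases hl : l = j
  · subst hl
    simp [evenCoeffs, Pi.single_apply, Fin.ext_iff]
  · rw [update_of_ne hl]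
    unfold evenCoeffs
    split_ifs
    · simp [Fin.ext_iff, hl]
    · rfl

theorem hasFDerivAt_stepOddMap_apply (k : ℕ) (v : Fin (2 * k + 1) → ℝ) (i : Fin (2 * k + 1)) :
    HasFDerivAt (fun v => stepOddMap k v i)
      ((ContinuousLinearMap.proj i).comp (fderiv ℝ (stepOddMap k) v)) v :=
  hasFDerivAt_pi'.1 (differentiable_stepOddMap k v).hasFDerivAt i

theorem fderiv_stepOddMap_single_last (k : ℕ) (v : Fin (2 * k + 1) → ℝ) (i : Fin (2 * k + 1)) :
    fderiv ℝ (stepOddMap k) v (Pi.single (Fin.last _) 1) i =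
      -cK k (evenCoeffs k v) (min (i : ℕ) (2 * k - i)) :=
  (hasFDerivAt_stepOddMap_apply k v i).apply_eq_of_add_smul fun t => by
    simp only [stepOddMap_apply, evenCoeffs_add_smul_single_last, Pi.add_apply,
      Pi.smul_apply, Pi.single_eq_same, smul_eq_mul, mul_one, mul_neg]
    ring

theorem fderiv_stepOddMap_single_castSucc (k : ℕ) (v : Fin (2 * k + 1) → ℝ)
    (i : Fin (2 * k + 1)) (j : Fin (2 * k))
    (hij : min (i : ℕ) (2 * k - i) ≤ min ((j : ℕ) + 1) (2 * k - (j + 1))) :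
    fderiv ℝ (stepOddMap k) v (Pi.single j.castSucc 1) i = if (i : ℕ) = j + 1 then 1 else 0 :=
  (hasFDerivAt_stepOddMap_apply k v i).apply_eq_of_add_smul fun t => by
    have := j.isLt
    have hc := cK_update k (evenCoeffs k v) j (evenCoeffs k v j + t) (min (i : ℕ) (2 * k - i))
      (by omega) (by omega)
    simp only [stepOddMap_apply, evenCoeffs_add_smul_single_castSucc, hc, Pi.add_apply,
      Pi.smul_apply, ne_eq, Fin.castSucc_ne_last, not_false_eq_true, Pi.single_eq_of_ne',
      smul_eq_mul, mul_zero, add_zero, mul_ite, mul_one]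
    by_cases hi : (i : ℕ) = j + 1
    · rw [if_pos hi, if_pos (by omega), if_pos (by omega), hi, Nat.add_sub_cancel, update_self]
      ring
    · rw [if_neg hi, add_zero]
      split_ifs
      · rw [update_of_ne (by omega)]
      · rfl

def stepOddOrder (k i : ℕ) : ℕ :=
  2 * min i (2 * k - i) + if k < i then 1 else 0

theorem stepOddOrder_injective (k : ℕ) :
    Injective fun i : Fin (2 * k + 1) => stepOddOrder k i := by
  intro i j h
  have := i.isLt
  have := j.isLt
  ext
  simp only [stepOddOrder] at h
  split_ifs at h <;> omega

theorem min_le_min_of_stepOddOrder_lt {k i j : ℕ} (h : stepOddOrder k i < stepOddOrder k j) :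
    min i (2 * k - i) ≤ min j (2 * k - j) := by
  simp only [stepOddOrder] at h
  split_ifs at h <;> omega

theorem blockTriangular_stepOddJacobian (k : ℕ) (v : Fin (2 * k + 1) → ℝ) :
    ((LinearMap.toMatrix' (fderiv ℝ (stepOddMap k) v).toLinearMap).submatrix id
      (finRotate (2 * k + 1)).symm).BlockTriangular
      (OrderDual.toDual ∘ fun i => stepOddOrder k i) := by
  intro i j hij
  change stepOddOrder k i < stepOddOrder k j at hij
  induction j using Fin.cases with
  | zero => simp [stepOddOrder] at hij
  | succ j =>
    rw [Matrix.submatrix_apply, id, finRotate_symm_succ, LinearMap.toMatrix'_apply,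
      ContinuousLinearMap.coe_coe, fderiv_stepOddMap_single_castSucc k v i j
        (min_le_min_of_stepOddOrder_lt hij), if_neg]
    rintro hi
    rw [← Fin.val_succ, ← Fin.ext_iff] at hi
    exact hij.ne (by rw [hi])

theorem geronimo_case_jacobian_b_step (k : ℕ) (v : Fin (2 * k + 1) → ℝ) :
    LinearMap.det ((fderiv ℝ (stepOddMap k) v).toLinearMap) = -1 := by
  have h_zero : fderiv ℝ (stepOddMap k) v (Pi.single (Fin.last _) 1) 0 = -1 := by
    rw [fderiv_stepOddMap_single_last, Fin.val_zero, Nat.zero_min]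
    rfl
  have h_succ (i : Fin (2 * k)) :
      fderiv ℝ (stepOddMap k) v (Pi.single i.castSucc 1) i.succ = 1 := by
    rw [fderiv_stepOddMap_single_castSucc k v _ _ (by simp), Fin.val_succ, if_pos rfl]
  rw [← LinearMap.det_toMatrix', ← Matrix.det_submatrix_finRotate_symm_odd,
    (blockTriangular_stepOddJacobian k v).det_eq_prod_diag
      (OrderDual.toDual.injective.comp (stepOddOrder_injective k)), Fin.prod_univ_succ]
  simp only [Matrix.submatrix_apply, id, finRotate_symm_zero, finRotate_symm_succ,
    LinearMap.toMatrix'_apply, ContinuousLinearMap.coe_coe, h_zero, h_succ,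
    Finset.prod_const_one, mul_one]
end
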